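/- For every a > 0 the radiative equation of state p_a(ρ,θ) = p(ρ,θ) + a·θ⁴, e_a(ρ,θ) = e(ρ,θ) + 3a·θ⁴/ρ, s_a(ρ,θ) = s(ρ,θ) + 4a·θ³/ρ again satisfies the Gibbs relation: for all ρ > 0 and θ > 0, θ·∂s_a/∂θ(ρ,θ) = ∂e_a/∂θ(ρ,θ) and θ·∂s_a/∂ρ(ρ,θ) = ∂e_a/∂ρ(ρ,θ) - p_a(ρ,θ)/ρ². -/
import Mathlib


/-- `P(Z) = Z` for `Z ≤ Z̃`, `P(Z) = (3/5)·Z^{5/3}·Z̃^{-2/3} + (2/5)·Z̃` for `Z > Z̃`. -/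
noncomputable def Pfun (Zt Z : ℝ) : ℝ :=
  if Z ≤ Zt then Z else (3 / 5) * Z ^ ((5 : ℝ) / 3) * Zt ^ (-((2 : ℝ) / 3)) + (2 / 5) * Zt

/-- `S(Z) = 1 - log(Z/Z̃)` for `Z ≤ Z̃`, `S(Z) = Z̃/Z` for `Z > Z̃`. -/
noncomputable def Sfun (Zt Z : ℝ) : ℝ :=
  if Z ≤ Zt then 1 - Real.log (Z / Zt) else Zt / Z

/-- Pressure `p(ρ,θ) = θ^{5/2}·P(ρ·θ^{-3/2})`. -/
noncomputable def pfun (Zt ρ θ : ℝ) : ℝ :=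
  θ ^ ((5 : ℝ) / 2) * Pfun Zt (ρ * θ ^ (-((3 : ℝ) / 2)))

/-- Specific internal energy `e(ρ,θ) = (3/2)·θ^{5/2}·P(ρ·θ^{-3/2})/ρ`. -/
noncomputable def efun (Zt ρ θ : ℝ) : ℝ :=
  (3 / 2) * θ ^ ((5 : ℝ) / 2) * Pfun Zt (ρ * θ ^ (-((3 : ℝ) / 2))) / ρ

/-- Specific entropy `s(ρ,θ) = S(ρ·θ^{-3/2})`. -/
noncomputable def sfun (Zt ρ θ : ℝ) : ℝ :=
  Sfun Zt (ρ * θ ^ (-((3 : ℝ) / 2)))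

/-- Radiative pressure `p_a(ρ,θ) = p(ρ,θ) + a·θ⁴`. -/
noncomputable def pa (Zt a ρ θ : ℝ) : ℝ := pfun Zt ρ θ + a * θ ^ 4

/-- Radiative internal energy `e_a(ρ,θ) = e(ρ,θ) + 3a·θ⁴/ρ`. -/
noncomputable def ea (Zt a ρ θ : ℝ) : ℝ := efun Zt ρ θ + 3 * a * θ ^ 4 / ρ

/-- Radiative entropy `s_a(ρ,θ) = s(ρ,θ) + 4a·θ³/ρ`. -/
noncomputable def sa (Zt a ρ θ : ℝ) : ℝ := sfun Zt ρ θ + 4 * a * θ ^ 3 / ρ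

noncomputable def Pd (Zt Z : ℝ) : ℝ :=
  if Z ≤ Zt then 1 else Z ^ ((2 : ℝ) / 3) * Zt ^ (-((2 : ℝ) / 3))

noncomputable def Sd (Zt Z : ℝ) : ℝ :=
  if Z ≤ Zt then -Z⁻¹ else -(Zt / Z ^ 2)

lemma hasDerivAt_Pfun {Zt : ℝ} (hZt : 0 < Zt) {Z : ℝ} (hZ : 0 < Z) :
    HasDerivAt (Pfun Zt) (Pd Zt Z) Z := by
  have hform : ∀ y : ℝ, 0 < y →
      HasDerivAt (fun y : ℝ => 3 / 5 * y ^ ((5 : ℝ) / 3) * Zt ^ (-((2 : ℝ) / 3)) + 2 / 5 * Zt)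
        (y ^ ((2 : ℝ) / 3) * Zt ^ (-((2 : ℝ) / 3))) y := by
    intro y hy
    have h := Real.hasDerivAt_rpow_const (x := y) (p := (5 : ℝ) / 3) (Or.inl hy.ne')
    have h2 := ((h.const_mul ((3 : ℝ) / 5)).mul_const (Zt ^ (-((2 : ℝ) / 3)))).add_const
      (2 / 5 * Zt)
    have h3 : y ^ ((2 : ℝ) / 3) * Zt ^ (-((2 : ℝ) / 3))
        = 3 / 5 * ((5 : ℝ) / 3 * y ^ ((5 : ℝ) / 3 - 1)) * Zt ^ (-((2 : ℝ) / 3)) := by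
      rw [show (5 : ℝ) / 3 - 1 = 2 / 3 by norm_num]; ring
    rw [h3]; exact h2
  have hvalZt : 3 / 5 * Zt ^ ((5 : ℝ) / 3) * Zt ^ (-((2 : ℝ) / 3)) + 2 / 5 * Zt = Zt := by
    rw [mul_assoc, ← Real.rpow_add hZt,
      show (5 : ℝ) / 3 + -((2 : ℝ) / 3) = 1 by norm_num, Real.rpow_one]
    ring
  rcases lt_trichotomy Z Zt with h | h | h
  · rw [Pd, if_pos h.le]
    have hev : ∀ᶠ y in nhds Z, Pfun Zt y = y := by
      filter_upwards [eventually_lt_nhds h] with y hy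
      simp [Pfun, hy.le]
    exact (hasDerivAt_id Z).congr_of_eventuallyEq hev
  · subst h
    rw [Pd, if_pos le_rfl]
    have hL : HasDerivWithinAt (Pfun Z) 1 (Set.Iic Z) Z := by
      refine (hasDerivAt_id Z).hasDerivWithinAt.congr ?_ ?_
      · intro y hy; simp [Pfun, Set.mem_Iic.mp hy]
      · simp [Pfun]
    have hR : HasDerivWithinAt (Pfun Z) 1 (Set.Ici Z) Z := by
      have hg := hform Z hZ
      have hval : Z ^ ((2 : ℝ) / 3) * Z ^ (-((2 : ℝ) / 3)) = 1 := by
        rw [← Real.rpow_add hZ, show (2 : ℝ) / 3 + -((2 : ℝ) / 3) = 0 by norm_num,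
          Real.rpow_zero]
      rw [hval] at hg
      refine hg.hasDerivWithinAt.congr ?_ ?_
      · intro y hy
        by_cases h' : y ≤ Z
        · have hyZ : y = Z := le_antisymm h' hy
          rw [hyZ]; simp only [Pfun, if_pos le_rfl]; exact hvalZt.symm
        · simp [Pfun, h']
      · simp only [Pfun, if_pos le_rfl]; exact hvalZt.symm
    have h2 := hL.union hR
    rw [Set.Iic_union_Ici] at h2
    exact h2.hasDerivAt Filter.univ_mem
  · rw [Pd, if_neg (not_le.mpr h)]
    have hev : ∀ᶠ y in nhds Z,
        Pfun Zt y = 3 / 5 * y ^ ((5 : ℝ) / 3) * Zt ^ (-((2 : ℝ) / 3)) + 2 / 5 * Zt := by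
      filter_upwards [eventually_gt_nhds h] with y hy
      simp [Pfun, not_le.mpr hy]
    exact (hform Z hZ).congr_of_eventuallyEq hev

lemma hasDerivAt_Sfun {Zt : ℝ} (hZt : 0 < Zt) {Z : ℝ} (hZ : 0 < Z) :
    HasDerivAt (Sfun Zt) (Sd Zt Z) Z := by
  have hformL : ∀ y : ℝ, 0 < y →
      HasDerivAt (fun y : ℝ => 1 - Real.log (y / Zt)) (-y⁻¹) y := by
    intro y hy
    have h := ((Real.hasDerivAt_log hy.ne').sub_const (Real.log Zt)).const_sub 1
    refine h.congr_of_eventuallyEq ?_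
    filter_upwards [eventually_gt_nhds hy] with z hz
    rw [Real.log_div hz.ne' hZt.ne']
  have hformR : ∀ y : ℝ, 0 < y →
      HasDerivAt (fun y : ℝ => Zt / y) (-(Zt / y ^ 2)) y := by
    intro y hy
    have h := (hasDerivAt_inv hy.ne').const_mul Zt
    have h2 : -(Zt / y ^ 2) = Zt * (-(y ^ 2)⁻¹) := by field_simp
    rw [h2]
    exact h.congr_of_eventuallyEq (by filter_upwards with z; rw [div_eq_mul_inv])
  rcases lt_trichotomy Z Zt with h | h | h
  · rw [Sd, if_pos h.le]
    have hev : ∀ᶠ y in nhds Z, Sfun Zt y = 1 - Real.log (y / Zt) := by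
      filter_upwards [eventually_lt_nhds h] with y hy
      simp [Sfun, hy.le]
    exact (hformL Z hZ).congr_of_eventuallyEq hev
  · subst h
    rw [Sd, if_pos le_rfl]
    have hL : HasDerivWithinAt (Sfun Z) (-Z⁻¹) (Set.Iic Z) Z := by
      refine (hformL Z hZ).hasDerivWithinAt.congr ?_ ?_
      · intro y hy; simp [Sfun, Set.mem_Iic.mp hy]
      · simp [Sfun]
    have hR : HasDerivWithinAt (Sfun Z) (-Z⁻¹) (Set.Ici Z) Z := by
      have hg := hformR Z hZ
      have hval : -(Z / Z ^ 2) = -Z⁻¹ := by field_simp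
      rw [hval] at hg
      refine hg.hasDerivWithinAt.congr ?_ ?_
      · intro y hy
        by_cases h' : y ≤ Z
        · have hyZ : y = Z := le_antisymm h' hy
          rw [hyZ]; simp [Sfun, div_self hZ.ne']
        · simp [Sfun, h']
      · simp [Sfun, div_self hZ.ne']
    have h2 := hL.union hR
    rw [Set.Iic_union_Ici] at h2
    exact h2.hasDerivAt Filter.univ_mem
  · rw [Sd, if_neg (not_le.mpr h)]
    have hev : ∀ᶠ y in nhds Z, Sfun Zt y = Zt / y := by
      filter_upwards [eventually_gt_nhds h] with y hy
      simp [Sfun, not_le.mpr hy]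
    exact (hformR Z hZ).congr_of_eventuallyEq hev

lemma pow_rpow_helper {v : ℝ} (hv : 0 ≤ v) {n m : ℕ} {p : ℝ} (h : (n : ℝ) * p = m) :
    (v ^ n) ^ p = v ^ m := by
  rw [← Real.rpow_natCast v n, ← Real.rpow_mul hv, h, Real.rpow_natCast]

/-- For every `a > 0`, the radiative equation of state again satisfies the Gibbs relation:
for all `ρ > 0`, `θ > 0`, `θ·∂s_a/∂θ(ρ,θ) = ∂e_a/∂θ(ρ,θ)` and
`θ·∂s_a/∂ρ(ρ,θ) = ∂e_a/∂ρ(ρ,θ) - p_a(ρ,θ)/ρ²`. -/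
theorem stmt5 (Zt : ℝ) (hZt : 0 < Zt) :
    ∀ a : ℝ, 0 < a → ∀ ρ θ : ℝ, 0 < ρ → 0 < θ →
      ∃ dsθ deθ dsρ deρ : ℝ,
        HasDerivAt (fun t => sa Zt a ρ t) dsθ θ ∧
        HasDerivAt (fun t => ea Zt a ρ t) deθ θ ∧
        HasDerivAt (fun r => sa Zt a r θ) dsρ ρ ∧
        HasDerivAt (fun r => ea Zt a r θ) deρ ρ ∧
        θ * dsθ = deθ ∧
        θ * dsρ = deρ - pa Zt a ρ θ / ρ ^ 2 := by
  intro a ha ρ θ hρ hθ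
  have hθne : θ ≠ 0 := hθ.ne'
  have hρne : ρ ≠ 0 := hρ.ne'
  have hZ : 0 < ρ * θ ^ (-((3 : ℝ) / 2)) := mul_pos hρ (Real.rpow_pos_of_pos hθ _)
  have hinnerθ : HasDerivAt (fun t : ℝ => ρ * t ^ (-((3 : ℝ) / 2)))
      (ρ * (-((3 : ℝ) / 2) * θ ^ (-((3 : ℝ) / 2) - 1))) θ :=
    (Real.hasDerivAt_rpow_const (Or.inl hθne)).const_mul ρ
  have hSθ := (hasDerivAt_Sfun hZt hZ).comp θ hinnerθ
  have hPθ := (hasDerivAt_Pfun hZt hZ).comp θ hinnerθ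
  have hr52 : HasDerivAt (fun t : ℝ => t ^ ((5 : ℝ) / 2)) ((5 : ℝ) / 2 * θ ^ ((5 : ℝ) / 2 - 1)) θ :=
    Real.hasDerivAt_rpow_const (Or.inl hθne)
  have hinnerρ : HasDerivAt (fun r : ℝ => r * θ ^ (-((3 : ℝ) / 2)))
      (1 * θ ^ (-((3 : ℝ) / 2))) ρ := (hasDerivAt_id ρ).mul_const _
  have hSρ := (hasDerivAt_Sfun hZt hZ).comp ρ hinnerρ
  have hPρ := (hasDerivAt_Pfun hZt hZ).comp ρ hinnerρ
  refine ⟨?_, ?_, ?_, ?_, ?h1, ?h2, ?h3, ?h4, ?e1, ?e2⟩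
  case h1 =>
    exact hSθ.add (((hasDerivAt_pow 3 θ).const_mul (4 * a)).div_const ρ)
  case h2 =>
    exact (((hr52.const_mul ((3 : ℝ) / 2)).mul hPθ).div_const ρ).add
      (((hasDerivAt_pow 4 θ).const_mul (3 * a)).div_const ρ)
  case h3 =>
    exact hSρ.add ((hasDerivAt_const ρ (4 * a * θ ^ 3)).div (hasDerivAt_id ρ) hρne)
  case h4 =>
    have hfun4 : (fun r => ea Zt a r θ)
        = fun r : ℝ => (3 / 2 * θ ^ ((5 : ℝ) / 2)) * (Pfun Zt (r * θ ^ (-((3 : ℝ) / 2))) / r)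
            + (3 * a * θ ^ 4) / r := by
      funext r; rw [ea, efun]; ring
    rw [hfun4]
    exact ((hPρ.div (hasDerivAt_id ρ) hρne).const_mul (3 / 2 * θ ^ ((5 : ℝ) / 2))).add
      ((hasDerivAt_const ρ (3 * a * θ ^ 4)).div (hasDerivAt_id ρ) hρne)
  case e1 =>
    obtain ⟨u, hu0, hu2⟩ : ∃ u : ℝ, 0 < u ∧ u ^ 2 = θ :=
      ⟨Real.sqrt θ, Real.sqrt_pos.2 hθ, Real.sq_sqrt hθ.le⟩
    have h52 : θ ^ ((5 : ℝ) / 2) = u ^ 5 := by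
      rw [← hu2]; exact pow_rpow_helper hu0.le (by norm_num)
    have h32 : θ ^ ((3 : ℝ) / 2) = u ^ 3 := by
      rw [← hu2]; exact pow_rpow_helper hu0.le (by norm_num)
    have hn32 : θ ^ (-((3 : ℝ) / 2)) = (u ^ 3)⁻¹ := by rw [Real.rpow_neg hθ.le, h32]
    have hn52 : θ ^ (-((5 : ℝ) / 2)) = (u ^ 5)⁻¹ := by rw [Real.rpow_neg hθ.le, h52]
    try rw [show -((3 : ℝ) / 2) - 1 = -((5 : ℝ) / 2) by norm_num,
      show (5 : ℝ) / 2 - 1 = (3 : ℝ) / 2 by norm_num]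
    simp only [Function.comp_apply, id_eq, Pd, Sd, Pfun, Sfun, pa, pfun]
    split_ifs with hle
    · simp only [h52, h32, hn32, hn52]
      rw [← hu2]
      field_simp
      ring
    · obtain ⟨v, hv0, hv3⟩ : ∃ v : ℝ, 0 < v ∧ v ^ 3 = ρ * θ ^ (-((3 : ℝ) / 2)) :=
        ⟨(ρ * θ ^ (-((3 : ℝ) / 2))) ^ ((1 : ℝ) / 3), Real.rpow_pos_of_pos hZ _, by
          rw [← Real.rpow_natCast _ 3, ← Real.rpow_mul hZ.le]; norm_num⟩
      obtain ⟨w, hw0, hw3⟩ : ∃ w : ℝ, 0 < w ∧ w ^ 3 = Zt :=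
        ⟨Zt ^ ((1 : ℝ) / 3), Real.rpow_pos_of_pos hZt _, by
          rw [← Real.rpow_natCast _ 3, ← Real.rpow_mul hZt.le]; norm_num⟩
      have hZ53 : (ρ * θ ^ (-((3 : ℝ) / 2))) ^ ((5 : ℝ) / 3) = v ^ 5 := by
        rw [← hv3]; exact pow_rpow_helper hv0.le (by norm_num)
      have hZ23 : (ρ * θ ^ (-((3 : ℝ) / 2))) ^ ((2 : ℝ) / 3) = v ^ 2 := by
        rw [← hv3]; exact pow_rpow_helper hv0.le (by norm_num)
      have hw2 : Zt ^ (-((2 : ℝ) / 3)) = (w ^ 2)⁻¹ := by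
        rw [Real.rpow_neg hZt.le, ← hw3]
        rw [pow_rpow_helper hw0.le (by norm_num : ((3 : ℕ) : ℝ) * ((2 : ℝ) / 3) = (2 : ℕ))]
      rw [hZ53] <;> skip
      rw [hZ23] <;> skip
      rw [hw2]
      simp only [h52, h32, hn32, hn52]
      rw [← hw3, ← hu2]
      rw [hn32] at hv3
      have hρv : v ^ 3 * u ^ 3 = ρ := by rw [hv3]; field_simp
      rw [← hρv]
      field_simp
      ring
  case e2 =>
    obtain ⟨u, hu0, hu2⟩ : ∃ u : ℝ, 0 < u ∧ u ^ 2 = θ :=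
      ⟨Real.sqrt θ, Real.sqrt_pos.2 hθ, Real.sq_sqrt hθ.le⟩
    have h52 : θ ^ ((5 : ℝ) / 2) = u ^ 5 := by
      rw [← hu2]; exact pow_rpow_helper hu0.le (by norm_num)
    have h32 : θ ^ ((3 : ℝ) / 2) = u ^ 3 := by
      rw [← hu2]; exact pow_rpow_helper hu0.le (by norm_num)
    have hn32 : θ ^ (-((3 : ℝ) / 2)) = (u ^ 3)⁻¹ := by rw [Real.rpow_neg hθ.le, h32]
    have hn52 : θ ^ (-((5 : ℝ) / 2)) = (u ^ 5)⁻¹ := by rw [Real.rpow_neg hθ.le, h52]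
    try rw [show -((3 : ℝ) / 2) - 1 = -((5 : ℝ) / 2) by norm_num,
      show (5 : ℝ) / 2 - 1 = (3 : ℝ) / 2 by norm_num]
    simp only [Function.comp_apply, id_eq, Pd, Sd, Pfun, Sfun, pa, pfun]
    split_ifs with hle
    · simp only [h52, h32, hn32, hn52]
      rw [← hu2]
      field_simp
      ring
    · obtain ⟨v, hv0, hv3⟩ : ∃ v : ℝ, 0 < v ∧ v ^ 3 = ρ * θ ^ (-((3 : ℝ) / 2)) :=
        ⟨(ρ * θ ^ (-((3 : ℝ) / 2))) ^ ((1 : ℝ) / 3), Real.rpow_pos_of_pos hZ _, by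
          rw [← Real.rpow_natCast _ 3, ← Real.rpow_mul hZ.le]; norm_num⟩
      obtain ⟨w, hw0, hw3⟩ : ∃ w : ℝ, 0 < w ∧ w ^ 3 = Zt :=
        ⟨Zt ^ ((1 : ℝ) / 3), Real.rpow_pos_of_pos hZt _, by
          rw [← Real.rpow_natCast _ 3, ← Real.rpow_mul hZt.le]; norm_num⟩
      have hZ53 : (ρ * θ ^ (-((3 : ℝ) / 2))) ^ ((5 : ℝ) / 3) = v ^ 5 := by
        rw [← hv3]; exact pow_rpow_helper hv0.le (by norm_num)
      have hZ23 : (ρ * θ ^ (-((3 : ℝ) / 2))) ^ ((2 : ℝ) / 3) = v ^ 2 := by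
        rw [← hv3]; exact pow_rpow_helper hv0.le (by norm_num)
      have hw2 : Zt ^ (-((2 : ℝ) / 3)) = (w ^ 2)⁻¹ := by
        rw [Real.rpow_neg hZt.le, ← hw3]
        rw [pow_rpow_helper hw0.le (by norm_num : ((3 : ℕ) : ℝ) * ((2 : ℝ) / 3) = (2 : ℕ))]
      rw [hZ53] <;> skip
      rw [hZ23] <;> skip
      rw [hw2]
      simp only [h52, h32, hn32, hn52]
      rw [← hw3, ← hu2]
      rw [hn32] at hv3
      have hρv : v ^ 3 * u ^ 3 = ρ := by rw [hv3]; field_simp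
      rw [← hρv]
      field_simp
      ring
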